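/- arXiv:2502.08128 — 5 statements merged into one kernel-verified Lean document; each statement's English description precedes it below -/
import Mathlib

section
/- The number of labelled trees on the vertex set {1,...,n} is exactly n^(n-2). -/
/-!
Rooting a tree on `Fin n` at `0` and sending every other vertex to its neighbour on the path
to `0` identifies trees with *parent maps*: maps fixing the root all of whose orbits reach it.
Prüfer's bijection encodes a parent map on a vertex set `V` by repeatedly deleting the smallest
leaf and recording its parent. The resulting word has length `|V| - 1`, entries in `V` and last
entry the root, and every such word arises exactly once, so there are `|V| ^ (|V| - 2)` of them.
-/

open Finset Function

variable {α : Type*}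

/-- `f` is the parent map of a tree on `V` rooted at `r`. It is the identity off `V`, so that
such maps are determined by their values on `V`. -/
structure IsParentMap (V : Finset α) (r : α) (f : α → α) : Prop where
  apply_of_notMem : ∀ v ∉ V, f v = v
  apply_root : f r = r
  apply_mem : ∀ v ∈ V, f v ∈ V
  exists_iterate_eq_root : ∀ v ∈ V, ∃ k, f^[k] v = r

lemma iterate_update_of_forall_iterate_ne [DecidableEq α] {f : α → α} {a b v : α}
    (h : ∀ j, f^[j] v ≠ a) (k : ℕ) : (update f a b)^[k] v = f^[k] v := by
  induction k generalizing v with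
  | zero => rfl
  | succ k ih =>
    rw [iterate_succ_apply, iterate_succ_apply, update_of_ne (show v ≠ a from h 0),
      ih fun j => by simpa only [iterate_succ_apply] using h (j + 1)]

lemma image_erase_update {β : Type*} [DecidableEq α] [DecidableEq β] (V : Finset α)
    (f : α → β) (l : α) (x : β) : (V.erase l).image (update f l x) = (V.erase l).image f :=
  image_congr fun _ hv => update_of_ne (mem_erase.1 hv).1 _ _

namespace IsParentMap

variable {V : Finset α} {r : α} {f : α → α}

lemma iterate_mem (hf : IsParentMap V r f) {v : α} (hv : v ∈ V) (k : ℕ) : f^[k] v ∈ V := by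
  induction k with
  | zero => exact hv
  | succ k ih => rw [iterate_succ_apply']; exact hf.apply_mem _ ih

lemma root_mem (hf : IsParentMap V r f) {v : α} (hv : v ∈ V) : r ∈ V := by
  obtain ⟨k, hk⟩ := hf.exists_iterate_eq_root v hv
  exact hk ▸ hf.iterate_mem hv k

lemma eq_root_of_isPeriodicPt (hf : IsParentMap V r f) {v : α} (hv : v ∈ V) {n : ℕ}
    (hn : 0 < n) (hp : IsPeriodicPt f n v) : v = r := by
  obtain ⟨k, hk⟩ := hf.exists_iterate_eq_root v hv
  calc v = f^[n * k] v := (hp.mul_const k).eq.symm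
    _ = f^[n * k - k] (f^[k] v) := by
      rw [← iterate_add_apply, Nat.sub_add_cancel (Nat.le_mul_of_pos_left k hn)]
    _ = r := by rw [hk, iterate_fixed hf.apply_root]

lemma apply_ne (hf : IsParentMap V r f) {v : α} (hv : v ∈ V) (hvr : v ≠ r) : f v ≠ v :=
  fun h => hvr (hf.eq_root_of_isPeriodicPt hv one_pos h)

variable [DecidableEq α]

lemma sdiff_image_nonempty (hf : IsParentMap V r f) {v : α} (hv : v ∈ V) (hvr : v ≠ r) :
    (V \ V.image f).Nonempty := by
  rw [sdiff_nonempty]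
  intro hsub
  -- `f` would then permute `V`, and `f^[k] v = r = f^[k] r` would force `v = r`.
  have hinj : Set.InjOn f V := by
    rw [← card_image_iff]
    exact le_antisymm card_image_le (card_le_card hsub)
  obtain ⟨k, hk⟩ := hf.exists_iterate_eq_root v hv
  refine hvr (hinj.iterate (fun u hu => hf.apply_mem u hu) k hv (hf.root_mem hv) ?_)
  rw [hk, iterate_fixed hf.apply_root]

lemma eq_singleton_of_not_nonempty_sdiff_image (hf : IsParentMap V r f) (hr : r ∈ V)
    (h : ¬(V \ V.image f).Nonempty) : V = {r} :=
  eq_singleton_iff_unique_mem.2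
    ⟨hr, fun _ hv => by_contra fun hvr => h (hf.sdiff_image_nonempty hv hvr)⟩

lemma ne_root_of_mem_sdiff_image (hf : IsParentMap V r f) {l : α} (hl : l ∈ V \ V.image f) :
    l ≠ r := by
  rintro rfl
  exact (mem_sdiff.1 hl).2 (mem_image.2 ⟨l, (mem_sdiff.1 hl).1, hf.apply_root⟩)

lemma erase_leaf (hf : IsParentMap V r f) {l : α} (hl : l ∈ V \ V.image f) :
    IsParentMap (V.erase l) r (update f l l) := by
  obtain ⟨hlV, hlf⟩ := mem_sdiff.1 hl
  have hlr := hf.ne_root_of_mem_sdiff_image hl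
  have hne : ∀ u ∈ V, f u ≠ l := fun u hu h => hlf (mem_image.2 ⟨u, hu, h⟩)
  refine ⟨fun v hv => ?_, by rw [update_of_ne hlr.symm, hf.apply_root], fun v hv => ?_,
    fun v hv => ?_⟩
  · rcases eq_or_ne v l with rfl | hvl
    · exact update_self ..
    · rw [update_of_ne hvl, hf.apply_of_notMem v fun h => hv (mem_erase.2 ⟨hvl, h⟩)]
  · obtain ⟨hvl, hvV⟩ := mem_erase.1 hv
    rw [update_of_ne hvl]
    exact mem_erase.2 ⟨hne v hvV, hf.apply_mem v hvV⟩
  · obtain ⟨hvl, hvV⟩ := mem_erase.1 hv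
    obtain ⟨k, hk⟩ := hf.exists_iterate_eq_root v hvV
    have hav : ∀ j, f^[j] v ≠ l := by
      rintro (_ | j)
      · exact hvl
      · rw [iterate_succ_apply']; exact hne _ (hf.iterate_mem hvV j)
    exact ⟨k, by rw [iterate_update_of_forall_iterate_ne hav, hk]⟩

lemma insert_leaf {g : α → α} (hg : IsParentMap V r g) {l p : α} (hl : l ∉ V)
    (hp : p ∈ V) : IsParentMap (insert l V) r (update g l p) := by
  have hlr : r ≠ l := fun h => hl (h ▸ hg.root_mem hp)
  have hav : ∀ v ∈ V, ∀ j, g^[j] v ≠ l := fun v hv j h => hl (h ▸ hg.iterate_mem hv j)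
  refine ⟨fun v hv => ?_, by rw [update_of_ne hlr, hg.apply_root], fun v hv => ?_,
    fun v hv => ?_⟩
  · rw [mem_insert, not_or] at hv
    rw [update_of_ne hv.1, hg.apply_of_notMem v hv.2]
  · rcases mem_insert.1 hv with rfl | hv
    · rw [update_self]; exact mem_insert_of_mem hp
    · rw [update_of_ne (show v ≠ l from hav v hv 0)]
      exact mem_insert_of_mem (hg.apply_mem v hv)
  · rcases mem_insert.1 hv with rfl | hv
    · obtain ⟨k, hk⟩ := hg.exists_iterate_eq_root p hp
      exact ⟨k + 1, by rw [iterate_succ_apply, update_self,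
        iterate_update_of_forall_iterate_ne (hav p hp), hk]⟩
    · obtain ⟨k, hk⟩ := hg.exists_iterate_eq_root v hv
      exact ⟨k, by rw [iterate_update_of_forall_iterate_ne (hav v hv), hk]⟩

end IsParentMap

/-- Unlike the customary Prüfer code, ours keeps the final entry, which is always the root;
hence the length `|V| - 1`. -/
structure IsPruferCode (V : Finset α) (r : α) (c : List α) : Prop where
  length_add_one : c.length + 1 = V.card
  mem : ∀ x ∈ c, x ∈ V
  getLast?_eq : ∀ x ∈ c.getLast?, x = r

namespace IsPruferCode

variable {V : Finset α} {r p : α} {c t : List α}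

lemma eq_singleton_of_nil (hc : IsPruferCode V r []) (hr : r ∈ V) : V = {r} :=
  eq_singleton_iff_unique_mem.2
    ⟨hr, fun _ hv => card_le_one.1 hc.length_add_one.symm.le _ hv _ hr⟩

lemma getLast?_eq_some (hc : IsPruferCode V r c) (hne : c ≠ []) : c.getLast? = some r := by
  rw [List.getLast?_eq_some_getLast hne, hc.getLast?_eq _ (List.getLast?_eq_some_getLast hne)]

lemma root_mem_of_cons (hc : IsPruferCode V r (p :: t)) : r ∈ p :: t :=
  List.mem_of_getLast? (hc.getLast?_eq_some (List.cons_ne_nil p t))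

variable [DecidableEq α]

lemma sdiff_toFinset_nonempty (hc : IsPruferCode V r c) : (V \ c.toFinset).Nonempty := by
  rw [← card_pos, card_sdiff_of_subset fun x hx => hc.mem x (List.mem_toFinset.1 hx)]
  have := c.toFinset_card_le
  have := hc.length_add_one
  omega

lemma ne_root_of_mem_sdiff_toFinset (hc : IsPruferCode V r (p :: t)) {l : α}
    (hl : l ∈ V \ (p :: t).toFinset) : l ≠ r :=
  fun h => (mem_sdiff.1 hl).2 (List.mem_toFinset.2 (h ▸ hc.root_mem_of_cons))

lemma erase (hc : IsPruferCode V r (p :: t)) {l : α} (hl : l ∈ V \ (p :: t).toFinset) :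
    IsPruferCode (V.erase l) r t := by
  obtain ⟨hlV, hlc⟩ := mem_sdiff.1 hl
  refine ⟨?_, fun x hx => mem_erase.2 ⟨?_, hc.mem x (List.mem_cons_of_mem p hx)⟩,
    fun x hx => hc.getLast?_eq x ?_⟩
  · rw [card_erase_of_mem hlV, ← hc.length_add_one, List.length_cons]; rfl
  · rintro rfl; exact hlc (List.mem_toFinset.2 (List.mem_cons_of_mem p hx))
  · rw [List.getLast?_cons, Option.mem_def.1 hx]; rfl

end IsPruferCode

lemma card_list_length_eq_mem (V : Finset α) (m : ℕ) :
    Nat.card {l : List α // l.length = m ∧ ∀ x ∈ l, x ∈ V} = V.card ^ m := by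
  let e : {l : List α // l.length = m ∧ ∀ x ∈ l, x ∈ V} ≃ (Fin m → V) :=
    { toFun l i := ⟨l.1.get (i.cast l.2.1.symm), l.2.2 _ (List.get_mem _ _)⟩
      invFun g := ⟨List.ofFn fun i => (g i : α), by simp, by simp⟩
      left_inv l := by obtain ⟨l, rfl, hl⟩ := l; simp
      right_inv g := by funext i; simp }
  rw [Nat.card_congr e, Nat.card_fun, Nat.card_fin, Nat.card_eq_finsetCard]

lemma card_isPruferCode {V : Finset α} {r : α} (hr : r ∈ V) :
    Nat.card {c : List α // IsPruferCode V r c} = V.card ^ (V.card - 2) := by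
  obtain ⟨m, hm⟩ := Nat.exists_eq_add_one_of_ne_zero (card_pos.2 ⟨r, hr⟩).ne'
  rcases m with _ | m
  · rw [hm, zero_add, Nat.one_pow, Nat.card_eq_one_iff_exists]
    refine ⟨⟨[], by simp [hm], by simp, by simp⟩, fun c => Subtype.ext ?_⟩
    exact List.eq_nil_of_length_eq_zero (by have := c.2.length_add_one; omega)
  · let e : {c : List α // IsPruferCode V r c} ≃
        {l : List α // l.length = m ∧ ∀ x ∈ l, x ∈ V} :=
      { toFun c := ⟨c.1.dropLast, by have := c.2.length_add_one; simp; omega,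
          fun x hx => c.2.mem x (List.dropLast_subset _ hx)⟩
        invFun l := ⟨l.1 ++ [r], by simp [l.2.1, hm], fun x hx => by
          rcases List.mem_append.1 hx with hx | hx
          · exact l.2.2 x hx
          · exact List.mem_singleton.1 hx ▸ hr, by simp⟩
        left_inv c := Subtype.ext <| List.dropLast_append_getLast? r <|
          c.2.getLast?_eq_some fun h => by have := c.2.length_add_one; simp [h] at this; omega
        right_inv l := Subtype.ext List.dropLast_concat }
    rw [Nat.card_congr e, card_list_length_eq_mem, hm]
    rfl

section Prufer

variable [LinearOrder α]

/-- The leaves of the tree of `f` are the vertices of `V \ V.image f`, the root being its own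
parent. -/
def pruferCode (V : Finset α) (f : α → α) : List α :=
  if h : (V \ V.image f).Nonempty then
    let l := (V \ V.image f).min' h
    f l :: pruferCode (V.erase l) (update f l l)
  else []
termination_by V.card
decreasing_by exact card_erase_lt_of_mem (mem_sdiff.1 (min'_mem _ h)).1

/-- The first leaf removed by `pruferCode` is the smallest vertex missing from the code.
The `else` branch is never taken on a Prüfer code. -/
def pruferDecode (V : Finset α) : List α → α → α
  | [] => id
  | p :: t =>
    if h : (V \ (p :: t).toFinset).Nonempty then
      let l := (V \ (p :: t).toFinset).min' h
      update (pruferDecode (V.erase l) t) l p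
    else id

lemma pruferCode_of_sdiff_image_eq {V S : Finset α} {f : α → α} (hS : S.Nonempty)
    (h : V \ V.image f = S) : pruferCode V f =
      f (S.min' hS) :: pruferCode (V.erase (S.min' hS)) (update f (S.min' hS) (S.min' hS)) := by
  subst h; rw [pruferCode, dif_pos hS]

lemma pruferDecode_cons_of_sdiff_toFinset_eq {V S : Finset α} {p : α} {t : List α}
    (hS : S.Nonempty) (h : V \ (p :: t).toFinset = S) :
    pruferDecode V (p :: t) = update (pruferDecode (V.erase (S.min' hS)) t) (S.min' hS) p := by
  subst h; rw [pruferDecode, dif_pos hS]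

namespace IsParentMap

variable {V : Finset α} {r : α} {f : α → α}

lemma insert_toFinset_pruferCode (hf : IsParentMap V r f) (hr : r ∈ V) :
    insert r (pruferCode V f).toFinset = V.image f := by
  fun_induction pruferCode V f with
  | case1 V f h l ih =>
    have hl : l ∈ V \ V.image f := min'_mem _ h
    have hr' : r ∈ V.erase l := mem_erase.2 ⟨(hf.ne_root_of_mem_sdiff_image hl).symm, hr⟩
    rw [List.toFinset_cons, insert_comm, ih (hf.erase_leaf hl) hr', image_erase_update,
      ← image_insert, insert_erase (mem_sdiff.1 hl).1]
  | case2 V f h =>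
    rw [hf.eq_singleton_of_not_nonempty_sdiff_image hr h, image_singleton, hf.apply_root]
    rfl

lemma length_pruferCode (hf : IsParentMap V r f) (hr : r ∈ V) :
    (pruferCode V f).length + 1 = V.card := by
  fun_induction pruferCode V f with
  | case1 V f h l ih =>
    have hl : l ∈ V \ V.image f := min'_mem _ h
    have hr' : r ∈ V.erase l := mem_erase.2 ⟨(hf.ne_root_of_mem_sdiff_image hl).symm, hr⟩
    have := ih (hf.erase_leaf hl) hr'
    rw [card_erase_of_mem (mem_sdiff.1 hl).1] at this
    have := card_pos.2 ⟨r, hr⟩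
    simp only [List.length_cons]
    omega
  | case2 V f h => rw [hf.eq_singleton_of_not_nonempty_sdiff_image hr h]; rfl

lemma getLast?_pruferCode (hf : IsParentMap V r f) (hr : r ∈ V) :
    ∀ x ∈ (pruferCode V f).getLast?, x = r := by
  fun_induction pruferCode V f with
  | case1 V f h l ih =>
    have hl : l ∈ V \ V.image f := min'_mem _ h
    obtain ⟨hlV, hlf⟩ := mem_sdiff.1 hl
    have hr' : r ∈ V.erase l := mem_erase.2 ⟨(hf.ne_root_of_mem_sdiff_image hl).symm, hr⟩
    intro x hx
    rw [List.getLast?_cons, Option.mem_some_iff] at hx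
    cases hc : (pruferCode (V.erase l) (update f l l)).getLast? with
    | none =>
      -- the recursive code is empty, so `V.erase l = {r}` contains the parent of `l`
      rw [hc, Option.getD_none] at hx
      have hlen := (hf.erase_leaf hl).length_pruferCode hr'
      rw [List.getLast?_eq_none_iff.1 hc] at hlen
      have hfl : f l ∈ V.erase l :=
        mem_erase.2 ⟨fun h' => hlf (mem_image.2 ⟨l, hlV, h'⟩), hf.apply_mem l hlV⟩
      rw [← hx]
      exact card_le_one.1 hlen.symm.le _ hfl _ hr'
    | some y =>
      rw [hc, Option.getD_some] at hx
      exact ih (hf.erase_leaf hl) hr' x (hx ▸ hc)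
  | case2 V f h => simp

lemma isPruferCode_pruferCode (hf : IsParentMap V r f) (hr : r ∈ V) :
    IsPruferCode V r (pruferCode V f) := by
  refine ⟨hf.length_pruferCode hr, fun x hx => ?_, hf.getLast?_pruferCode hr⟩
  have hx : x ∈ V.image f := by
    rw [← hf.insert_toFinset_pruferCode hr]
    exact mem_insert_of_mem (List.mem_toFinset.2 hx)
  obtain ⟨v, hv, rfl⟩ := mem_image.1 hx
  exact hf.apply_mem v hv

lemma pruferDecode_pruferCode (hf : IsParentMap V r f) (hr : r ∈ V) :
    pruferDecode V (pruferCode V f) = f := by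
  fun_induction pruferCode V f with
  | case1 V f h l ih =>
    have hl : l ∈ V \ V.image f := min'_mem _ h
    have hr' : r ∈ V.erase l := mem_erase.2 ⟨(hf.ne_root_of_mem_sdiff_image hl).symm, hr⟩
    have hc := hf.isPruferCode_pruferCode hr
    have himg := hf.insert_toFinset_pruferCode hr
    rw [pruferCode_of_sdiff_image_eq h rfl] at hc himg
    have hleaves :
        V \ (f l :: pruferCode (V.erase l) (update f l l)).toFinset = V \ V.image f := by
      rw [← himg, insert_eq_of_mem (List.mem_toFinset.2 hc.root_mem_of_cons)]
    rw [pruferDecode_cons_of_sdiff_toFinset_eq h hleaves, ih (hf.erase_leaf hl) hr',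
      update_idem, update_eq_self]
  | case2 V f h =>
    have hV := hf.eq_singleton_of_not_nonempty_sdiff_image hr h
    funext v
    rcases eq_or_ne v r with rfl | hvr
    · exact hf.apply_root.symm
    · exact (hf.apply_of_notMem v (by simpa [hV] using hvr)).symm

end IsParentMap

namespace IsPruferCode

variable {V : Finset α} {r : α} {c : List α}

lemma isParentMap_pruferDecode (hc : IsPruferCode V r c) (hr : r ∈ V) :
    IsParentMap V r (pruferDecode V c) := by
  induction c generalizing V with
  | nil =>
    rw [hc.eq_singleton_of_nil hr]
    exact ⟨fun _ _ => rfl, rfl, fun _ hv => hv, fun _ hv => ⟨0, mem_singleton.1 hv⟩⟩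
  | cons p t ih =>
    have hS := hc.sdiff_toFinset_nonempty
    have hl := min'_mem _ hS
    set l := (V \ (p :: t).toFinset).min' hS
    obtain ⟨hlV, hlc⟩ := mem_sdiff.1 hl
    have hg := ih (hc.erase hl) (mem_erase.2 ⟨(hc.ne_root_of_mem_sdiff_toFinset hl).symm, hr⟩)
    have hp : p ∈ V.erase l :=
      mem_erase.2 ⟨fun h => hlc (by simp [h]), hc.mem p List.mem_cons_self⟩
    rw [pruferDecode_cons_of_sdiff_toFinset_eq hS rfl]
    simpa only [insert_erase hlV] using hg.insert_leaf (notMem_erase l V) hp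

lemma pruferCode_pruferDecode (hc : IsPruferCode V r c) (hr : r ∈ V) :
    pruferCode V (pruferDecode V c) = c := by
  induction c generalizing V with
  | nil =>
    rw [hc.eq_singleton_of_nil hr, pruferCode, dif_neg]
    simp [pruferDecode]
  | cons p t ih =>
    have hS := hc.sdiff_toFinset_nonempty
    have hl := min'_mem _ hS
    set l := (V \ (p :: t).toFinset).min' hS
    have hr' : r ∈ V.erase l := mem_erase.2 ⟨(hc.ne_root_of_mem_sdiff_toFinset hl).symm, hr⟩
    have hg := (hc.erase hl).isParentMap_pruferDecode hr'
    set g := pruferDecode (V.erase l) t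
    have hdec : pruferDecode V (p :: t) = update g l p :=
      pruferDecode_cons_of_sdiff_toFinset_eq hS rfl
    have himg : V.image (update g l p) = (p :: t).toFinset := by
      calc V.image (update g l p) = insert p ((V.erase l).image g) := by
            conv_lhs => rw [← insert_erase (mem_sdiff.1 hl).1]
            rw [image_insert, update_self, image_erase_update]
        _ = insert r (p :: t).toFinset := by
            rw [← hg.insert_toFinset_pruferCode hr', ih (hc.erase hl) hr', List.toFinset_cons,
              insert_comm]
        _ = (p :: t).toFinset := insert_eq_of_mem (List.mem_toFinset.2 hc.root_mem_of_cons)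
    rw [hdec, pruferCode_of_sdiff_image_eq hS (by rw [himg]), update_self, update_idem,
      update_eq_self_iff.2 (hg.apply_of_notMem l (notMem_erase l V)).symm, ih (hc.erase hl) hr']

end IsPruferCode

def parentMapEquivPruferCode {V : Finset α} {r : α} (hr : r ∈ V) :
    {f : α → α // IsParentMap V r f} ≃ {c : List α // IsPruferCode V r c} where
  toFun f := ⟨pruferCode V f.1, f.2.isPruferCode_pruferCode hr⟩
  invFun c := ⟨pruferDecode V c.1, c.2.isParentMap_pruferDecode hr⟩
  left_inv f := Subtype.ext (f.2.pruferDecode_pruferCode hr)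
  right_inv c := Subtype.ext (c.2.pruferCode_pruferDecode hr)

lemma card_isParentMap {V : Finset α} {r : α} (hr : r ∈ V) :
    Nat.card {f : α → α // IsParentMap V r f} = V.card ^ (V.card - 2) := by
  rw [Nat.card_congr (parentMapEquivPruferCode hr), card_isPruferCode hr]

end Prufer

namespace SimpleGraph

def parentGraph (f : α → α) : SimpleGraph α := fromRel fun a b => f a = b

lemma parentGraph_adj {f : α → α} {a b : α} :
    (parentGraph f).Adj a b ↔ a ≠ b ∧ (f a = b ∨ f b = a) :=
  fromRel_adj _ a b

lemma reachable_parentGraph_iterate (f : α → α) (v : α) (k : ℕ) :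
    (parentGraph f).Reachable v (f^[k] v) := by
  induction k with
  | zero => rfl
  | succ k ih =>
    rw [iterate_succ_apply']
    refine ih.trans ?_
    by_cases h : f^[k] v = f (f^[k] v)
    · rw [← h]
    · exact (parentGraph_adj.2 ⟨h, Or.inl rfl⟩).reachable

lemma _root_.IsParentMap.eq_of_parentGraph_eq {V : Finset α} {r : α} {f g : α → α}
    (hf : IsParentMap V r f) (hg : IsParentMap V r g) (h : parentGraph f = parentGraph g) :
    f = g := by
  funext v
  by_contra hv
  have hvV : v ∈ V := by_contra fun hvV =>
    hv (by rw [hf.apply_of_notMem v hvV, hg.apply_of_notMem v hvV])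
  -- If `f u ≠ g u`, the common edge `{u, f u}` forces `g (f u) = u`; as `f` has no 2-cycles,
  -- `f` and `g` then also differ at `f u`, and so on up to the root.
  have hdiff : ∀ j, f (f^[j] v) ≠ g (f^[j] v) := by
    intro j
    induction j with
    | zero => exact hv
    | succ j ih =>
      set u := f^[j] v
      have huV : u ∈ V := hf.iterate_mem hvV j
      have hur : u ≠ r := fun hur => ih (by rw [hur, hf.apply_root, hg.apply_root])
      have hadj : (parentGraph g).Adj u (f u) :=
        h ▸ parentGraph_adj.2 ⟨(hf.apply_ne huV hur).symm, Or.inl rfl⟩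
      have hgfu : g (f u) = u := (parentGraph_adj.1 hadj).2.resolve_left (Ne.symm ih)
      rw [iterate_succ_apply']
      intro hfg
      exact hur (hf.eq_root_of_isPeriodicPt huV two_pos (show f (f u) = u by rw [hfg, hgfu]))
  obtain ⟨k, hk⟩ := hf.exists_iterate_eq_root v hvV
  exact hdiff k (by rw [hk, hf.apply_root, hg.apply_root])

namespace IsTree

variable {T : SimpleGraph α} (hT : T.IsTree)

noncomputable def pathTo (v r : α) : T.Walk v r :=
  (hT.existsUnique_path v r).exists.choose

lemma isPath_pathTo (v r : α) : (hT.pathTo v r).IsPath :=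
  (hT.existsUnique_path v r).exists.choose_spec

lemma eq_pathTo {v r : α} {p : T.Walk v r} (hp : p.IsPath) : p = hT.pathTo v r :=
  (hT.existsUnique_path v r).unique hp (hT.isPath_pathTo v r)

noncomputable def parent (r v : α) : α := (hT.pathTo v r).snd

lemma parent_root (r : α) : hT.parent r r = r := by
  rw [parent, ← hT.eq_pathTo Walk.IsPath.nil]
  rfl

lemma iterate_parent (r v : α) (k : ℕ) :
    (hT.parent r)^[k] v = (hT.pathTo v r).getVert k := by
  induction k generalizing v with
  | zero => exact (Walk.getVert_zero _).symm
  | succ k ih =>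
    rw [iterate_succ_apply, ih, parent, ← hT.eq_pathTo (hT.isPath_pathTo v r).tail,
      Walk.getVert_tail]

lemma isParentMap_parent [Fintype α] (r : α) : IsParentMap univ r (hT.parent r) where
  apply_of_notMem v hv := absurd (mem_univ v) hv
  apply_root := hT.parent_root r
  apply_mem _ _ := mem_univ _
  exists_iterate_eq_root v _ := ⟨_, by rw [iterate_parent, Walk.getVert_length]⟩

lemma parent_eq_or_parent_eq_of_adj (r : α) {a b : α} (h : T.Adj a b) :
    hT.parent r a = b ∨ hT.parent r b = a := by
  by_cases ha : a ∈ (hT.pathTo b r).support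
  · exact Or.inr (hT.isAcyclic.eq_snd_of_adj_start (hT.isPath_pathTo b r) h.symm ha).symm
  · left
    rw [parent, ← hT.eq_pathTo (Walk.IsPath.cons (h := h) (hT.isPath_pathTo b r) ha),
      Walk.snd_cons]

lemma adj_parent (r : α) {v : α} (hv : hT.parent r v ≠ v) : T.Adj v (hT.parent r v) := by
  refine Walk.adj_snd (Walk.not_nil_of_ne fun hvr => hv ?_)
  rw [hvr, hT.parent_root]

lemma parentGraph_parent (r : α) : parentGraph (hT.parent r) = T := by
  ext a b
  refine ⟨fun ⟨hab, h⟩ => ?_,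
    fun h => parentGraph_adj.2 ⟨h.ne, hT.parent_eq_or_parent_eq_of_adj r h⟩⟩
  rcases h with rfl | rfl
  · exact hT.adj_parent r (Ne.symm hab)
  · exact (hT.adj_parent r hab).symm

end IsTree

variable [Fintype α] {r : α} {f : α → α}

lemma _root_.IsParentMap.connected_parentGraph (hf : IsParentMap univ r f) :
    (parentGraph f).Connected := by
  have hr : ∀ v, (parentGraph f).Reachable v r := fun v => by
    obtain ⟨k, hk⟩ := hf.exists_iterate_eq_root v (mem_univ v)
    exact hk ▸ reachable_parentGraph_iterate f v k
  exact (connected_iff _).2 ⟨fun u v => (hr u).trans (hr v).symm, ⟨r⟩⟩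

lemma _root_.IsParentMap.card_edgeSet_parentGraph (hf : IsParentMap univ r f) :
    Nat.card (parentGraph f).edgeSet + 1 = Nat.card α := by
  classical
  have hadj (v : {v // v ≠ r}) : (parentGraph f).Adj v (f v) :=
    parentGraph_adj.2 ⟨(hf.apply_ne (mem_univ _) v.2).symm, Or.inl rfl⟩
  let e : {v // v ≠ r} → (parentGraph f).edgeSet := fun v => ⟨s(v, f v), hadj v⟩
  have he : Bijective e := by
    refine ⟨fun v w hvw => ?_, fun ⟨x, hx⟩ => ?_⟩
    · obtain ⟨h, -⟩ | ⟨h₁, h₂⟩ := Sym2.eq_iff.1 (congrArg Subtype.val hvw)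
      · exact Subtype.ext h
      · have hw : IsPeriodicPt f 2 w := show f (f w) = w by rw [← h₁, h₂]
        exact absurd (hf.eq_root_of_isPeriodicPt (mem_univ _) two_pos hw) w.2
    · obtain ⟨a, b⟩ := x
      obtain ⟨hab, h | h⟩ := parentGraph_adj.1 hx
      · refine ⟨⟨a, fun ha => hab ?_⟩, Subtype.ext (by simp [e, h])⟩
        rw [← h, ha, hf.apply_root]
      · refine ⟨⟨b, fun hb => hab ?_⟩, Subtype.ext (by simp [e, h, Sym2.eq_swap])⟩
        rw [← h, hb, hf.apply_root]
  rw [← Nat.card_congr (Equiv.ofBijective e he), Nat.card_eq_fintype_card,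
    Fintype.card_subtype_compl, Fintype.card_subtype_eq, Nat.card_eq_fintype_card,
    Nat.sub_add_cancel (Fintype.card_pos_iff.2 ⟨r⟩)]

lemma _root_.IsParentMap.isTree_parentGraph (hf : IsParentMap univ r f) :
    (parentGraph f).IsTree :=
  isTree_iff_connected_and_card.2 ⟨hf.connected_parentGraph, hf.card_edgeSet_parentGraph⟩

noncomputable def treeEquivParentMap (r : α) :
    {T : SimpleGraph α // T.IsTree} ≃ {f : α → α // IsParentMap univ r f} where
  toFun T := ⟨T.2.parent r, T.2.isParentMap_parent r⟩
  invFun f := ⟨parentGraph f.1, f.2.isTree_parentGraph⟩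
  left_inv T := Subtype.ext (T.2.parentGraph_parent r)
  right_inv f := Subtype.ext <|
    (f.2.isTree_parentGraph.isParentMap_parent r).eq_of_parentGraph_eq f.2
      (f.2.isTree_parentGraph.parentGraph_parent r)

end SimpleGraph

/-- Cayley's formula: the number of labelled trees on `n ≥ 1` vertices is `n ^ (n - 2)`. -/
theorem cayley_formula (n : ℕ) (hn : 1 ≤ n) :
    Nat.card {T : SimpleGraph (Fin n) // T.IsTree} = n ^ (n - 2) := by
  rw [Nat.card_congr (SimpleGraph.treeEquivParentMap ⟨0, hn⟩), card_isParentMap (mem_univ _),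
    card_univ, Fintype.card_fin]
end

section
/- Among all forests F in K_n with exactly ℓ edges, the number of spanning trees of K_n containing F is maximized when F is a matching of ℓ disjoint edges; i.e., for any forest F' with ℓ edges, the number of spanning trees containing F' is at most 2^ℓ · n^(n-2-ℓ). -/
/-!
A rooted tree on `V` is encoded by its parent map `p : V → V`, whose unique fixed point is the
root. Rooting a spanning tree `T ⊇ F` at any of the `n` vertices and then forgetting every edge
outside `F` gives a rooted forest whose underlying graph is exactly `F`. Such a forest is
determined by the direction of each edge of `F`, so there are at most `2^ℓ` of them, and each has
`n - ℓ` roots.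

A rooted forest with `k` roots extends to at most `n^(k-1)` rooted trees. To see this, double
count the pairs `(p, s)` where `p` is such a tree and `s` is one of the `k - 1` forest roots that
are not roots of `p`. The pair determines `(p s, s)`, and `s` cannot be reached from `p s` in the
forest. Each such `(v, s)` arises from at most `n^(k-2)` trees, by induction applied to the forest
with the edge `s ↦ v` added. So `(k - 1) · N ≤ n (k - 1) · n^(k-2)`.

Altogether `n · #{T ⊇ F} ≤ 2^ℓ · n^(n-ℓ-1)`.
-/

open Finset Function SimpleGraph

namespace ParentMap

variable {V : Type*}

/-- A rooted forest, given by its parent map: the roots are the fixed points, and iterating the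
parent map from any vertex reaches a root. -/
def IsRootedForest (p : V → V) : Prop := ∀ v, ∃ k, IsFixedPt p (p^[k] v)

def IsSubforest (q p : V → V) : Prop := ∀ v, q v ≠ v → p v = q v

def toGraph (p : V → V) : SimpleGraph V := fromRel fun u v => p u = v

lemma toGraph_adj {p : V → V} {u v : V} :
    (toGraph p).Adj u v ↔ u ≠ v ∧ (p u = v ∨ p v = u) :=
  fromRel_adj _ _ _

lemma IsRootedForest.isFixedPt_of_isPeriodicPt {p : V → V} (hp : IsRootedForest p) {v : V}
    {j : ℕ} (hj : 0 < j) (hper : IsPeriodicPt p j v) : IsFixedPt p v := by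
  obtain ⟨k, hk⟩ := hp v
  have : v = p^[k] v := by
    calc v = p^[j * k - k] (p^[k] v) := by
          rw [← iterate_add_apply, Nat.sub_add_cancel (Nat.le_mul_of_pos_left k hj),
            (hper.mul_const k).eq]
      _ = p^[k] v := (hk.iterate _).eq
  rw [this]
  exact hk

lemma IsRootedForest.eq_of_apply_eq_of_apply_eq {p : V → V} (hp : IsRootedForest p) {a b : V}
    (hab : p a = b) (hba : p b = a) : a = b := by
  have : IsPeriodicPt p 2 a := by simp [IsPeriodicPt, IsFixedPt, hab, hba]
  rw [← hab]
  exact (hp.isFixedPt_of_isPeriodicPt two_pos this).symm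

lemma IsRootedForest.mono {p q : V → V} (hp : IsRootedForest p) (hqp : IsSubforest q p) :
    IsRootedForest q := by
  intro v
  by_contra! hq
  have hiter : ∀ j, q^[j] v = p^[j] v := by
    intro j
    induction j with
    | zero => rfl
    | succ j ih => rw [iterate_succ_apply', iterate_succ_apply', ← ih, hqp _ (hq j)]
  obtain ⟨k, hk⟩ := hp v
  apply hq k
  rw [IsFixedPt, ← hqp _ (hq k), hiter]
  exact hk

lemma IsSubforest.exists_iterate_eq {q p : V → V} (hqp : IsSubforest q p) (v : V) (j : ℕ) :
    ∃ c, q^[j] v = p^[c] v := by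
  induction j with
  | zero => exact ⟨0, rfl⟩
  | succ j ih =>
    obtain ⟨c, hc⟩ := ih
    rw [iterate_succ_apply', hc]
    by_cases hfix : q (p^[c] v) = p^[c] v
    · exact ⟨c, hfix⟩
    · exact ⟨c + 1, by rw [iterate_succ_apply', hqp _ hfix]⟩

lemma IsSubforest.iterate_apply_ne {q p : V → V} (hqp : IsSubforest q p) (hp : IsRootedForest p)
    {s : V} (hs : p s ≠ s) (j : ℕ) : q^[j] (p s) ≠ s := by
  obtain ⟨c, hc⟩ := hqp.exists_iterate_eq (p s) j
  rw [hc, ← iterate_succ_apply]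
  exact fun h => hs (hp.isFixedPt_of_isPeriodicPt c.succ_pos h)

lemma IsRootedForest.apply_eq_iff_of_adj {q : V → V} (hq : IsRootedForest q) {a b : V}
    (hab : (toGraph q).Adj a b) : q a = b ↔ q b ≠ a := by
  obtain ⟨hne, hor⟩ := toGraph_adj.1 hab
  exact ⟨fun h h' => hne (hq.eq_of_apply_eq_of_apply_eq h h'), hor.resolve_right⟩

lemma eq_of_toGraph_eq_of_adj {q q' : V → V} (hG : toGraph q = toGraph q')
    (h : ∀ a b, (toGraph q).Adj a b → (q a = b ↔ q' a = b)) : q = q' := by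
  funext v
  by_cases hv : q v = v
  · by_cases hv' : q' v = v
    · rw [hv, hv']
    · have hadj : (toGraph q).Adj v (q' v) := hG ▸ toGraph_adj.2 ⟨Ne.symm hv', Or.inl rfl⟩
      exact (h v _ hadj).2 rfl
  · exact ((h v _ (toGraph_adj.2 ⟨Ne.symm hv, Or.inl rfl⟩)).1 rfl).symm

open scoped Classical

noncomputable def restrictTo (G : SimpleGraph V) (p : V → V) : V → V :=
  fun v => if G.Adj v (p v) then p v else v

lemma isSubforest_restrictTo (G : SimpleGraph V) (p : V → V) :
    IsSubforest (restrictTo G p) p := by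
  intro v hv
  unfold restrictTo at hv ⊢
  split_ifs at hv ⊢
  · rfl
  · exact absurd rfl hv

lemma restrictTo_eq_iff {G : SimpleGraph V} {p : V → V} {u v : V} (huv : u ≠ v) :
    restrictTo G p u = v ↔ G.Adj u v ∧ p u = v := by
  unfold restrictTo
  split_ifs with h
  · exact ⟨fun h' => ⟨h' ▸ h, h'⟩, And.right⟩
  · exact ⟨fun h' => absurd h' huv, fun ⟨hadj, hpu⟩ => absurd (hpu ▸ hadj) h⟩

lemma toGraph_restrictTo {G : SimpleGraph V} {p : V → V} (hGp : G ≤ toGraph p) :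
    toGraph (restrictTo G p) = G := by
  ext u v
  rw [toGraph_adj]
  constructor
  · rintro ⟨huv, h | h⟩
    · exact ((restrictTo_eq_iff huv).1 h).1
    · exact ((restrictTo_eq_iff (Ne.symm huv)).1 h).1.symm
  · intro hadj
    refine ⟨hadj.ne, ?_⟩
    rcases (toGraph_adj.1 (hGp hadj)).2 with h | h
    · exact Or.inl ((restrictTo_eq_iff hadj.ne).2 ⟨hadj, h⟩)
    · exact Or.inr ((restrictTo_eq_iff hadj.ne.symm).2 ⟨hadj.symm, h⟩)

section Tree

variable {T : SimpleGraph V} (hT : T.IsTree) (r : V)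

noncomputable def pathToRoot (v : V) : T.Walk v r := (hT.existsUnique_path v r).exists.choose

lemma isPath_pathToRoot (v : V) : (pathToRoot hT r v).IsPath :=
  (hT.existsUnique_path v r).exists.choose_spec

variable {r} in
lemma eq_pathToRoot {v : V} {p : T.Walk v r} (hp : p.IsPath) : p = pathToRoot hT r v :=
  (hT.existsUnique_path v r).unique hp (isPath_pathToRoot hT r v)

noncomputable def parentMap (v : V) : V := (pathToRoot hT r v).snd

lemma parentMap_root : parentMap hT r r = r := by
  rw [parentMap, ← eq_pathToRoot hT (Walk.IsPath.nil : (Walk.nil : T.Walk r r).IsPath)]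
  rfl

lemma parentMap_adj {v : V} (hv : v ≠ r) : T.Adj v (parentMap hT r v) :=
  Walk.adj_snd (Walk.not_nil_of_ne hv)

lemma parentMap_eq_self_iff {v : V} : parentMap hT r v = v ↔ v = r := by
  refine ⟨fun h => ?_, fun h => h ▸ parentMap_root hT r⟩
  by_contra hv
  exact (parentMap_adj hT r hv).ne' h

lemma iterate_parentMap_length (v : V) :
    (parentMap hT r)^[(pathToRoot hT r v).length] v = r := by
  induction h : (pathToRoot hT r v).length generalizing v with
  | zero => exact Walk.eq_of_length_eq_zero h
  | succ m ih =>
    have hnil : ¬ (pathToRoot hT r v).Nil := by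
      rw [← Walk.length_eq_zero_iff, h]
      exact m.succ_ne_zero
    have hlen : (pathToRoot hT r (pathToRoot hT r v).snd).length + 1 = m + 1 := by
      rw [← eq_pathToRoot hT (isPath_pathToRoot hT r v).tail, ← h]
      exact Walk.length_tail_add_one hnil
    rw [iterate_succ_apply]
    exact ih _ (Nat.succ_injective hlen)

lemma isRootedForest_parentMap : IsRootedForest (parentMap hT r) := by
  refine fun v => ⟨(pathToRoot hT r v).length, ?_⟩
  rw [IsFixedPt, iterate_parentMap_length]
  exact parentMap_root hT r

lemma toGraph_parentMap : toGraph (parentMap hT r) = T := by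
  have hparent : ∀ {u v}, u ≠ v → parentMap hT r u = v → T.Adj u v := by
    intro u v huv h
    have hur : u ≠ r := fun hur => huv (by rw [← h, hur, parentMap_root])
    exact h ▸ parentMap_adj hT r hur
  ext u v
  rw [toGraph_adj]
  refine ⟨fun ⟨huv, h⟩ => h.elim (hparent huv) fun h => (hparent (Ne.symm huv) h).symm,
    fun hadj => ⟨hadj.ne, ?_⟩⟩
  -- either `v` lies on the path from `u` to the root, and then it comes right after `u`, or
  -- prepending the edge `vu` to that path gives the path from `v` to the root
  by_cases hv : v ∈ (pathToRoot hT r u).support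
  · exact Or.inl (hT.isAcyclic.eq_snd_of_adj_start (isPath_pathToRoot hT r u) hadj hv).symm
  · right
    have hpath := eq_pathToRoot hT
      ((Walk.cons_isPath_iff hadj.symm _).2 ⟨isPath_pathToRoot hT r u, hv⟩)
    rw [parentMap, ← hpath, Walk.snd_cons]

end Tree

variable [Fintype V]

noncomputable def roots (p : V → V) : Finset V := univ.filter (IsFixedPt p)

def IsRootedTree (p : V → V) : Prop := IsRootedForest p ∧ #(roots p) = 1

noncomputable def treeExtensions (q : V → V) : Finset (V → V) :=
  univ.filter fun p => IsRootedTree p ∧ IsSubforest q p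

noncomputable def rootings (G : SimpleGraph V) : Finset (V → V) :=
  univ.filter fun q => IsRootedForest q ∧ toGraph q = G

noncomputable def rootedTreesContaining (G : SimpleGraph V) : Finset (V → V) :=
  univ.filter fun p => IsRootedTree p ∧ G ≤ toGraph p

@[simp]
lemma mem_roots {p : V → V} {v : V} : v ∈ roots p ↔ p v = v := by
  simp [roots, IsFixedPt]

lemma mem_treeExtensions {q p : V → V} :
    p ∈ treeExtensions q ↔ IsRootedTree p ∧ IsSubforest q p := by
  simp [treeExtensions]

lemma IsSubforest.roots_subset {q p : V → V} (hqp : IsSubforest q p) : roots p ⊆ roots q := by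
  intro v hv
  rw [mem_roots] at hv ⊢
  by_contra h
  exact h (hqp v h ▸ hv)

lemma IsSubforest.eq_of_roots_subset {q p : V → V} (hqp : IsSubforest q p)
    (hroots : roots q ⊆ roots p) : p = q := by
  funext v
  by_cases hv : q v = v
  · rw [mem_roots.1 (hroots (mem_roots.2 hv)), hv]
  · exact hqp v hv

lemma roots_update {q : V → V} {s v : V} (hsv : s ≠ v) :
    roots (update q s v) = (roots q).erase s := by
  ext w
  by_cases hw : w = s
  · subst hw
    simp [Ne.symm hsv]
  · simp [hw]

lemma edgeSet_toGraph (p : V → V) :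
    (toGraph p).edgeSet = (fun v => s(v, p v)) '' ↑(roots p)ᶜ := by
  ext e
  induction e using Sym2.ind with
  | _ a b =>
    simp only [mem_edgeSet, toGraph_adj, Set.mem_image, coe_compl, Set.mem_compl_iff, mem_coe,
      mem_roots, Sym2.eq_iff]
    constructor
    · rintro ⟨hab, rfl | rfl⟩
      · exact ⟨a, hab.symm, Or.inl ⟨rfl, rfl⟩⟩
      · exact ⟨b, hab, Or.inr ⟨rfl, rfl⟩⟩
    · rintro ⟨v, hv, ⟨rfl, rfl⟩ | ⟨rfl, rfl⟩⟩
      · exact ⟨Ne.symm hv, Or.inl rfl⟩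
      · exact ⟨hv, Or.inr rfl⟩

lemma IsRootedForest.card_roots_add_ncard_edgeSet {p : V → V} (hp : IsRootedForest p) :
    #(roots p) + (toGraph p).edgeSet.ncard = Fintype.card V := by
  have hinj : Set.InjOn (fun v => s(v, p v)) ↑(roots p)ᶜ := by
    intro v _ w hw h
    obtain ⟨rfl, -⟩ | ⟨hvw, hwv⟩ := Sym2.eq_iff.1 h
    · rfl
    · simp only [coe_compl, Set.mem_compl_iff, mem_coe, mem_roots] at hw
      exact absurd (hvw.symm.trans (hp.eq_of_apply_eq_of_apply_eq hwv hvw.symm)) hw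
  rw [edgeSet_toGraph, hinj.ncard_image, Set.ncard_coe_finset, card_compl]
  exact Nat.add_sub_of_le (card_le_univ _)

lemma card_treeExtensions_le_one {q : V → V} (hq : #(roots q) ≤ 1) :
    #(treeExtensions q) ≤ 1 := by
  have hq_only : ∀ p ∈ treeExtensions q, p = q := by
    intro p hp
    obtain ⟨⟨-, hroots⟩, hqp⟩ := mem_treeExtensions.1 hp
    exact hqp.eq_of_roots_subset
      (eq_of_subset_of_card_le hqp.roots_subset (hroots ▸ hq)).ge
  exact card_le_one.2 fun p hp p' hp' => (hq_only p hp).trans (hq_only p' hp').symm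

noncomputable def unreachableRoots (q : V → V) : Finset (V × V) :=
  univ.filter fun x => x.2 ∈ roots q ∧ ∀ j, q^[j] x.1 ≠ x.2

lemma IsRootedForest.card_unreachableRoots_le {q : V → V} (hq : IsRootedForest q) :
    #(unreachableRoots q) ≤ (#(roots q) - 1) * Fintype.card V := by
  refine card_le_mul_card_image_of_maps_to (f := Prod.fst) (t := univ)
    (fun _ _ => mem_univ _) _ fun v _ => ?_
  obtain ⟨k, hk⟩ := hq v
  rw [← card_erase_of_mem (mem_roots.2 hk)]
  refine card_le_card_of_injOn Prod.snd (fun x hx => ?_) fun x hx y hy hxy => ?_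
  · simp only [unreachableRoots, coe_filter, mem_filter, mem_univ, true_and,
      Set.mem_ofPred_eq] at hx
    obtain ⟨⟨hs, hreach⟩, rfl⟩ := hx
    exact mem_erase.2 ⟨(hreach k).symm, hs⟩
  · simp only [coe_filter, Set.mem_ofPred_eq] at hx hy
    exact Prod.ext (hx.2.trans hy.2.symm) hxy

lemma card_treeExtensions_mul_le {q : V → V} {k : ℕ} (hq : #(roots q) = k + 2)
    (ih : ∀ q' : V → V, #(roots q') = k + 1 → #(treeExtensions q') ≤ Fintype.card V ^ k) :
    #(treeExtensions q) * (k + 1) ≤ Fintype.card V ^ (k + 1) * (k + 1) := by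
  obtain hempty | ⟨p₀, hp₀⟩ := (treeExtensions q).eq_empty_or_nonempty
  · simp [hempty]
  have hqforest : IsRootedForest q :=
    (mem_treeExtensions.1 hp₀).1.1.mono (mem_treeExtensions.1 hp₀).2
  -- a tree `p` is related to `(v, s)` when `p` hangs the forest root `s` below `v`
  calc #(treeExtensions q) * (k + 1)
      ≤ #(unreachableRoots q) * Fintype.card V ^ k :=
        card_mul_le_card_mul (fun p x => p x.2 ≠ x.2 ∧ p x.2 = x.1) ?_ ?_
    _ ≤ (k + 1) * Fintype.card V * Fintype.card V ^ k := by
        gcongr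
        simpa [hq] using hqforest.card_unreachableRoots_le
    _ = Fintype.card V ^ (k + 1) * (k + 1) := by ring
  · intro p hp
    obtain ⟨⟨hpforest, hproots⟩, hqp⟩ := mem_treeExtensions.1 hp
    have hcard : #(roots q \ roots p) = k + 1 := by
      rw [card_sdiff_of_subset hqp.roots_subset, hq, hproots]; rfl
    rw [← hcard]
    refine card_le_card_of_injOn (fun s => (p s, s)) (fun s hs => ?_) fun s _ s' _ h => ?_
    · obtain ⟨hsq, hsp⟩ := mem_sdiff.1 hs
      rw [mem_roots] at hsp
      exact mem_filter.2
        ⟨mem_filter.2 ⟨mem_univ _, hsq, hqp.iterate_apply_ne hpforest hsp⟩, hsp, rfl⟩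
    · exact congrArg Prod.snd h
  · rintro ⟨v, s⟩ hvs
    simp only [unreachableRoots, mem_filter, mem_univ, true_and] at hvs
    obtain ⟨hsq, hreach⟩ := hvs
    have hsv : s ≠ v := (hreach 0).symm
    refine (card_le_card fun p hp => ?_).trans
      (ih _ (by rw [roots_update hsv, card_erase_of_mem hsq, hq]; rfl))
    obtain ⟨hp, -, hpsv⟩ := mem_filter.1 hp
    obtain ⟨htree, hqp⟩ := mem_treeExtensions.1 hp
    refine mem_treeExtensions.2 ⟨htree, fun w hw => ?_⟩
    by_cases hws : w = s
    · subst hws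
      simpa using hpsv
    · rw [update_of_ne hws] at hw ⊢
      exact hqp w hw

theorem card_treeExtensions_le (q : V → V) :
    #(treeExtensions q) ≤ Fintype.card V ^ (#(roots q) - 1) := by
  suffices h : ∀ k, ∀ q : V → V, #(roots q) = k + 1 →
      #(treeExtensions q) ≤ Fintype.card V ^ k by
    rcases hq : #(roots q) with _ | k
    · exact (card_treeExtensions_le_one (by omega)).trans (by simp)
    · exact h k q hq
  intro k
  induction k with
  | zero => exact fun q hq => (card_treeExtensions_le_one hq.le).trans (by simp)
  | succ k ih =>
    intro q hq
    exact Nat.le_of_mul_le_mul_right (card_treeExtensions_mul_le hq ih) k.succ_pos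

theorem card_rootings_le (G : SimpleGraph V) : #(rootings G) ≤ 2 ^ G.edgeSet.ncard := by
  -- a rooting is determined by whether, for each edge `e = s(e.out.1, e.out.2)`, `e.out.1` is
  -- the child
  let orient : rootings G → G.edgeSet → Bool := fun q e => q.1 e.1.out.1 = e.1.out.2
  have horient : orient.Injective := by
    rintro ⟨q, hq⟩ ⟨q', hq'⟩ h
    simp only [rootings, mem_filter, mem_univ, true_and] at hq hq'
    refine Subtype.ext (eq_of_toGraph_eq_of_adj (hq.2.trans hq'.2.symm) fun a b hab => ?_)
    have hab' : G.Adj a b := hq.2 ▸ hab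
    have hbit := congrFun h ⟨s(a, b), hab'⟩
    simp only [orient, decide_eq_decide] at hbit
    have hout := Quot.out_eq s(a, b)
    generalize Quot.out s(a, b) = x at hbit hout
    obtain ⟨c, d⟩ := x
    obtain ⟨rfl, rfl⟩ | ⟨rfl, rfl⟩ := Sym2.eq_iff.1 hout
    · exact hbit
    · rw [hq.1.apply_eq_iff_of_adj hab, hq'.1.apply_eq_iff_of_adj (hq'.2 ▸ hab')]
      exact not_congr hbit
  calc #(rootings G) = Nat.card (rootings G) := (Nat.card_eq_finsetCard _).symm
    _ ≤ Nat.card (G.edgeSet → Bool) := Nat.card_le_card_of_injective _ horient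
    _ = 2 ^ G.edgeSet.ncard := by
        rw [Nat.card_fun, Nat.card_coe_set_eq, Nat.card_eq_fintype_card, Fintype.card_bool]

theorem card_rootedTreesContaining_le (G : SimpleGraph V) :
    #(rootedTreesContaining G) ≤
      2 ^ G.edgeSet.ncard * Fintype.card V ^ (Fintype.card V - G.edgeSet.ncard - 1) := by
  have hcover : rootedTreesContaining G ⊆ (rootings G).biUnion treeExtensions := by
    intro p hp
    obtain ⟨htree, hGp⟩ := (mem_filter.1 hp).2
    refine mem_biUnion.2 ⟨restrictTo G p, ?_, ?_⟩
    · exact mem_filter.2 ⟨mem_univ _, htree.1.mono (isSubforest_restrictTo G p),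
        toGraph_restrictTo hGp⟩
    · exact mem_treeExtensions.2 ⟨htree, isSubforest_restrictTo G p⟩
  have hfiber : ∀ q ∈ rootings G, #(treeExtensions q) ≤
      Fintype.card V ^ (Fintype.card V - G.edgeSet.ncard - 1) := by
    intro q hq
    obtain ⟨hforest, rfl⟩ := (mem_filter.1 hq).2
    refine (card_treeExtensions_le q).trans_eq ?_
    rw [← hforest.card_roots_add_ncard_edgeSet, Nat.add_sub_cancel]
  calc _ ≤ #((rootings G).biUnion treeExtensions) := card_le_card hcover
    _ ≤ ∑ q ∈ rootings G, #(treeExtensions q) := card_biUnion_le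
    _ ≤ #(rootings G) * Fintype.card V ^ (Fintype.card V - G.edgeSet.ncard - 1) :=
        sum_le_card_nsmul _ _ _ hfiber
    _ ≤ _ := by gcongr; exact card_rootings_le G

lemma roots_parentMap {T : SimpleGraph V} (hT : T.IsTree) (r : V) :
    roots (parentMap hT r) = {r} := by
  ext v
  rw [mem_roots, parentMap_eq_self_iff, mem_singleton]

theorem card_trees_mul_le (G : SimpleGraph V) :
    Nat.card {T : SimpleGraph V // T.IsTree ∧ G ≤ T} * Fintype.card V ≤
      #(rootedTreesContaining G) := by
  let root : {T : SimpleGraph V // T.IsTree ∧ G ≤ T} × V → rootedTreesContaining G := fun x =>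
    ⟨parentMap x.1.2.1 x.2, mem_filter.2 ⟨mem_univ _,
      ⟨isRootedForest_parentMap _ _, by rw [roots_parentMap, card_singleton]⟩,
      (toGraph_parentMap x.1.2.1 x.2).symm ▸ x.1.2.2⟩⟩
  have hroot : root.Injective := by
    rintro ⟨⟨T, hT, _⟩, r⟩ ⟨⟨T', hT', _⟩, r'⟩ h
    have hp : parentMap hT r = parentMap hT' r' := congrArg Subtype.val h
    have hTT' : T = T' := by rw [← toGraph_parentMap hT r, hp, toGraph_parentMap]
    have hrr' : r = r' := singleton_injective (by rw [← roots_parentMap hT r, hp, roots_parentMap])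
    subst hTT' hrr'
    rfl
  calc _ = Nat.card ({T : SimpleGraph V // T.IsTree ∧ G ≤ T} × V) := by
        rw [Nat.card_prod, Nat.card_eq_fintype_card (α := V)]
    _ ≤ _ := Nat.card_le_card_of_injective root hroot
    _ = _ := Nat.card_eq_finsetCard _

end ParentMap

theorem matching_maximizes_tree_count_general (n ℓ : ℕ)
    (F' : SimpleGraph (Fin n)) (hcard : F'.edgeSet.ncard = ℓ) :
    Nat.card {T : SimpleGraph (Fin n) // T.IsTree ∧ F' ≤ T} ≤ 2 ^ ℓ * n ^ (n - 2 - ℓ) := by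
  obtain rfl | hn := Nat.eq_zero_or_pos n
  · have : IsEmpty {T : SimpleGraph (Fin 0) // T.IsTree ∧ F' ≤ T} :=
      ⟨fun T => T.2.1.connected.nonempty.elim Fin.elim0⟩
    rw [Nat.card_of_isEmpty]
    exact Nat.zero_le _
  have hcount :=
    (ParentMap.card_trees_mul_le F').trans (ParentMap.card_rootedTreesContaining_le F')
  rw [Fintype.card_fin, hcard] at hcount
  -- not an equality: `n - 2 - ℓ` truncates to `0` when `n ≤ ℓ + 1`
  have hexp : n ^ (n - ℓ - 1) ≤ n ^ (n - 2 - ℓ) * n := by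
    rw [← pow_succ]
    exact Nat.pow_le_pow_right hn (by omega)
  refine Nat.le_of_mul_le_mul_right (hcount.trans ?_) hn
  rw [mul_assoc]
  exact Nat.mul_le_mul_left _ hexp

/-- Among all forests with `ℓ` edges, matchings maximize the number of spanning trees of
`K_n` containing them: any forest `F'` with `ℓ` edges is contained in at most
`2^ℓ · n^(n-2-ℓ)` spanning trees (assuming `2ℓ ≤ n`). -/
theorem matching_maximizes_tree_count (n ℓ : ℕ) (hℓ : 2 * ℓ ≤ n)
    (F' : SimpleGraph (Fin n)) (hF' : F'.IsAcyclic) (hcard : F'.edgeSet.ncard = ℓ) :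
    Nat.card {T : SimpleGraph (Fin n) // T.IsTree ∧ F' ≤ T} ≤ 2 ^ ℓ * n ^ (n - 2 - ℓ) :=
  matching_maximizes_tree_count_general n ℓ F' hcard
end

section
/- If Γ is a vertex-transitive graph on N vertices, then ω(Γ) · α(Γ) ≤ N, where ω denotes the clique number and α the independence number. -/
/-!
Let `C` be a maximum clique and `I` a maximum independent set. A graph automorphism maps `C` to a
clique, which meets the independent set `I` in at most one vertex. Counting the pairs
`(g, c)` with `g` an automorphism, `c ∈ C` and `g c ∈ I` therefore gives at most `|Aut Γ|`
pairs. By transitivity, for fixed `c` and `i` exactly `|Aut Γ| / N` automorphisms send `c` to `i`,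
so there are `ω(Γ) α(Γ) |Aut Γ| / N` pairs.
-/

open Finset

section TransitiveAction

variable {G X : Type*} [Group G] [MulAction G X] [Fintype G] [DecidableEq X]
  [MulAction.IsPretransitive G X]

lemma card_filter_smul_eq_card_filter_smul_self (a b : X) :
    #{g : G | g • a = b} = #{g : G | g • a = a} := by
  obtain ⟨h, rfl⟩ := MulAction.exists_smul_eq G a b
  refine card_equiv (Equiv.mulLeft h⁻¹) fun g => ?_
  simp [mul_smul, inv_smul_eq_iff]

variable [Fintype X]

lemma card_mul_card_filter_smul_eq (a b : X) :
    Fintype.card X * #{g : G | g • a = b} = Fintype.card G := by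
  have hfibers : Fintype.card G = ∑ x : X, #{g : G | g • a = x} :=
    card_eq_sum_card_fiberwise fun g _ => mem_univ (g • a)
  simp [hfibers, card_filter_smul_eq_card_filter_smul_self a]

lemma card_mul_card_filter_smul_mem (a : X) (B : Finset X) :
    Fintype.card X * #{g : G | g • a ∈ B} = #B * Fintype.card G := by
  have hfibers : #{g : G | g • a ∈ B} = ∑ b ∈ B, #{g : G | g • a = b} := by
    rw [card_eq_sum_card_fiberwise (s := {g : G | g • a ∈ B}) (t := B) (f := (· • a))
      fun g hg => (mem_filter.mp hg).2]
    refine sum_congr rfl fun b hb => ?_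
    rw [filter_filter]
    exact congrArg card (filter_congr fun g _ => and_iff_right_of_imp fun h => h ▸ hb)
  rw [hfibers, mul_sum, sum_congr rfl fun b _ => card_mul_card_filter_smul_eq a b, sum_const,
    smul_eq_mul]

theorem card_mul_card_le_of_card_filter_smul_mem_le_one {A B : Finset X}
    (h : ∀ g : G, #{a ∈ A | g • a ∈ B} ≤ 1) : #A * #B ≤ Fintype.card X := by
  have hpairs : ∑ g : G, #{a ∈ A | g • a ∈ B} = ∑ a ∈ A, #{g : G | g • a ∈ B} :=
    sum_card_bipartiteAbove_eq_sum_card_bipartiteBelow fun g a => g • a ∈ B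
  have hle : ∑ g : G, #{a ∈ A | g • a ∈ B} ≤ Fintype.card G := by
    simpa using sum_le_sum fun g (_ : g ∈ univ) => h g
  have hcount : Fintype.card X * ∑ g : G, #{a ∈ A | g • a ∈ B} = #A * #B * Fintype.card G := by
    rw [hpairs, mul_sum, sum_congr rfl fun a _ => card_mul_card_filter_smul_mem a B, sum_const,
      smul_eq_mul, mul_assoc]
  refine Nat.le_of_mul_le_mul_right ?_ (Fintype.card_pos (α := G))
  calc #A * #B * Fintype.card G = Fintype.card X * ∑ g : G, #{a ∈ A | g • a ∈ B} := hcount.symm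
    _ ≤ Fintype.card X * Fintype.card G := Nat.mul_le_mul_left _ hle

end TransitiveAction

namespace SimpleGraph

variable {V W : Type*} {G : SimpleGraph V} {H : SimpleGraph W}

instance Iso.finite [Finite V] [Finite W] : Finite (G ≃g H) :=
  Finite.of_injective _ RelIso.toEquiv_injective

lemma IsClique.card_filter_map_mem_le_one [DecidableEq W] (f : G →g H) {C : Finset V}
    (hC : G.IsClique (C : Set V)) {I : Finset W} (hI : H.IsIndepSet (I : Set W)) :
    #{c ∈ C | f c ∈ I} ≤ 1 := by
  refine card_le_one.mpr fun c hc c' hc' => ?_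
  simp only [mem_filter] at hc hc'
  by_contra hne
  have hadj : H.Adj (f c) (f c') := f.map_adj (hC hc.1 hc'.1 hne)
  exact hI hc.2 hc'.2 hadj.ne hadj

end SimpleGraph

/-- Clique–coclique bound: if `Γ` is a vertex-transitive graph on `N` vertices, then
`ω(Γ) · α(Γ) ≤ N`, where the independence number `α(Γ)` is the clique number of the
complement. -/
theorem clique_coclique (V : Type*) [Fintype V] (Γ : SimpleGraph V)
    (htrans : ∀ u v : V, ∃ φ : Γ ≃g Γ, φ u = v) :
    Γ.cliqueNum * Γᶜ.cliqueNum ≤ Fintype.card V := by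
  classical
  have := Fintype.ofFinite (Γ ≃g Γ)
  have : MulAction.IsPretransitive (Γ ≃g Γ) V := ⟨htrans⟩
  obtain ⟨C, hC⟩ := Γ.exists_isNClique_cliqueNum
  obtain ⟨I, hI⟩ := Γᶜ.exists_isNClique_cliqueNum
  rw [← hC.card_eq, ← hI.card_eq]
  exact card_mul_card_le_of_card_filter_smul_mem_le_one (G := Γ ≃g Γ) fun φ =>
    hC.isClique.card_filter_map_mem_le_one φ.toHom (Γ.isClique_compl.mp hI.isClique)
end

section
/- Let T ⊆ U be forests in K_n with |U| = |T| + 1. Then the number of spanning trees of K_n containing T is at least (n/2) times the number of spanning trees containing U. -/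
/-!
Fix an edge `xy` of `U` that is not in `T`. For a spanning tree `S ⊇ U` and a vertex `w`, deleting
`xy` from `S` leaves two components; if `w` lies on the side of `x`, replace `xy` by `wy`, otherwise
by `wx`. The result is a spanning tree containing `T`, and since `w` is the unique neighbour of `y`
(resp. `x`) on the path towards `x` (resp. `y`), the pair `(S, w)` is recovered from the new tree
together with the side bit. This injects the `n · #{S ⊇ U}` pairs into two copies of `{S ⊇ T}`.
-/

namespace SimpleGraph

variable {V : Type*} {G S S' T U : SimpleGraph V} {u v v' w x y : V}

lemma deleteEdges_sup_edge_of_not_adj (h : ¬G.Adj u v) :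
    (G ⊔ edge u v).deleteEdges {s(u, v)} = G := by
  simp [deleteEdges_sup, h]

lemma deleteEdges_sup_edge_of_adj (h : G.Adj u v) :
    G.deleteEdges {s(u, v)} ⊔ edge u v = G :=
  sdiff_sup_cancel ((edge_le_iff _).mpr (.inr h))

lemma Reachable.deleteEdges_reachable_or (h : G.Reachable w x) (y : V) :
    (G.deleteEdges {s(x, y)}).Reachable w x ∨ (G.deleteEdges {s(x, y)}).Reachable w y := by
  classical
  obtain ⟨p, hp⟩ := h.exists_isPath
  by_cases hxy : s(x, y) ∈ p.edges
  · have hy := p.snd_mem_support_of_mem_edges hxy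
    have hx := Walk.endpoint_notMem_support_takeUntil hp hy (p.adj_of_mem_edges hxy).ne
    exact .inr <| reachable_deleteEdges_iff_exists_walk.mpr
      ⟨p.takeUntil y hy, fun h ↦ hx ((p.takeUntil y hy).fst_mem_support_of_mem_edges h)⟩
  · exact .inl <| reachable_deleteEdges_iff_exists_walk.mpr ⟨p, hxy⟩

lemma eq_of_not_reachable_deleteEdges (hv : G.Adj v y)
    (hvx : (G.deleteEdges {s(v, y)}).Reachable v x)
    (hxy : ¬(G.deleteEdges {s(v, y)}).Reachable x y)
    (hxy' : ¬(G.deleteEdges {s(v', y)}).Reachable x y) : v = v' := by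
  classical
  by_contra hne
  obtain ⟨p⟩ := hvx
  have hv'y : s(v', y) ∉ p.edges := fun hmem ↦
    hxy (.trans (.symm ⟨p⟩) ⟨p.takeUntil y (p.snd_mem_support_of_mem_edges hmem)⟩)
  have hvx' : (G.deleteEdges {s(v', y)}).Reachable v x :=
    reachable_deleteEdges_iff_exists_walk.mpr
      ⟨p.mapLe (deleteEdges_le _), by rwa [Walk.edges_mapLe_eq_edges]⟩
  have hvy' : (G.deleteEdges {s(v', y)}).Adj v y := by
    simp [hv, hne, hv.ne]
  exact hxy' (hvx'.symm.trans hvy'.reachable)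

def swapEdge (S : SimpleGraph V) (x y v : V) : SimpleGraph V :=
  S.deleteEdges {s(x, y)} ⊔ edge v y

lemma adj_swapEdge (h : v ≠ y) : (S.swapEdge x y v).Adj v y :=
  .inr ((edge_adj ..).mpr ⟨.inl ⟨rfl, rfl⟩, h⟩)

lemma IsAcyclic.not_reachable_deleteEdges (hG : G.IsAcyclic) (hxy : G.Adj x y) :
    ¬(G.deleteEdges {s(x, y)}).Reachable x y :=
  isAcyclic_iff_forall_adj_isBridge.mp hG hxy

lemma IsAcyclic.not_reachable_deleteEdges_of_reachable (hG : G.IsAcyclic) (hxy : G.Adj x y)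
    (hv : (G.deleteEdges {s(x, y)}).Reachable v x) : ¬(G.deleteEdges {s(x, y)}).Reachable v y :=
  fun h ↦ hG.not_reachable_deleteEdges hxy (hv.symm.trans h)

lemma IsTree.swapEdge (hS : S.IsTree) (hxy : S.Adj x y)
    (hv : (S.deleteEdges {s(x, y)}).Reachable v x) : (S.swapEdge x y v).IsTree := by
  have hvy := hS.isAcyclic.not_reachable_deleteEdges_of_reachable hxy hv
  have hvy' : (S.swapEdge x y v).Adj v y := adj_swapEdge fun h ↦ hvy (h ▸ .rfl)
  refine ⟨(connected_iff_exists_forall_reachable _).mpr ⟨y, fun w ↦ .symm ?_⟩,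
    (hS.isAcyclic.anti (deleteEdges_le _)).sup_edge_of_not_reachable hvy⟩
  rcases (hS.connected w x).deleteEdges_reachable_or y with h | h
  · exact ((h.trans hv.symm).mono le_sup_left).trans hvy'.reachable
  · exact h.mono le_sup_left

lemma le_swapEdge (hTS : T ≤ S) (hxy : ¬T.Adj x y) : T ≤ S.swapEdge x y v :=
  le_sup_of_le_left fun a b hab ↦ (deleteEdges_adj ..).mpr ⟨hTS hab, fun h ↦ hxy <| by
    rcases Sym2.eq_iff.mp h with ⟨rfl, rfl⟩ | ⟨rfl, rfl⟩
    exacts [hab, hab.symm]⟩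

lemma eq_and_eq_of_swapEdge_eq (hS : S.IsAcyclic) (hS' : S'.IsAcyclic) (hxy : S.Adj x y)
    (hxy' : S'.Adj x y) (hv : (S.deleteEdges {s(x, y)}).Reachable v x)
    (hv' : (S'.deleteEdges {s(x, y)}).Reachable v' x)
    (h : S.swapEdge x y v = S'.swapEdge x y v') : v = v' ∧ S = S' := by
  have hvy := hS.not_reachable_deleteEdges_of_reachable hxy hv
  have hD := deleteEdges_sup_edge_of_not_adj fun h ↦ hvy h.reachable
  have hD' := deleteEdges_sup_edge_of_not_adj fun h ↦
    hS'.not_reachable_deleteEdges_of_reachable hxy' hv' h.reachable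
  have hvv' : v = v' := by
    have hadj : (S.swapEdge x y v).Adj v y := adj_swapEdge fun h ↦ hvy (h ▸ .rfl)
    refine eq_of_not_reachable_deleteEdges (x := x) hadj ?_ ?_ ?_
    · rwa [swapEdge, hD]
    · rw [swapEdge, hD]; exact hS.not_reachable_deleteEdges hxy
    · rw [h, swapEdge, hD']; exact hS'.not_reachable_deleteEdges hxy'
  subst hvv'
  refine ⟨rfl, ?_⟩
  rw [← deleteEdges_sup_edge_of_adj hxy, ← deleteEdges_sup_edge_of_adj hxy', ← hD, ← hD']
  exact congrArg (fun G ↦ G.deleteEdges {s(v, y)} ⊔ edge x y) h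

section Counting

variable [Finite V]

lemma card_reachable_le_card_isTree (hTU : T ≤ U) (hxy : U.Adj x y) (hxyT : ¬T.Adj x y) :
    Nat.card {p : V × {S : SimpleGraph V // S.IsTree ∧ U ≤ S} //
        (p.2.1.deleteEdges {s(x, y)}).Reachable p.1 x} ≤
      Nat.card {S : SimpleGraph V // S.IsTree ∧ T ≤ S} := by
  refine Nat.card_le_card_of_injective
    (fun p ↦ ⟨p.1.2.1.swapEdge x y p.1.1, p.1.2.2.1.swapEdge (p.1.2.2.2 hxy) p.2,
      le_swapEdge (hTU.trans p.1.2.2.2) hxyT⟩) ?_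
  rintro ⟨⟨v, S, hS, hUS⟩, hv⟩ ⟨⟨v', S', hS', hUS'⟩, hv'⟩ h
  obtain ⟨rfl, rfl⟩ :=
    eq_and_eq_of_swapEdge_eq hS.isAcyclic hS'.isAcyclic (hUS hxy) (hUS' hxy) hv hv'
      (congrArg Subtype.val h)
  rfl

theorem card_mul_card_isTree_le (hTU : T ≤ U) (hxy : U.Adj x y) (hxyT : ¬T.Adj x y) :
    Nat.card V * Nat.card {S : SimpleGraph V // S.IsTree ∧ U ≤ S} ≤
      2 * Nat.card {S : SimpleGraph V // S.IsTree ∧ T ≤ S} := by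
  classical
  let P (x y : V) (p : V × {S : SimpleGraph V // S.IsTree ∧ U ≤ S}) : Prop :=
    (p.2.1.deleteEdges {s(x, y)}).Reachable p.1 x
  have hcompl : Nat.card {p // ¬P x y p} ≤ Nat.card {p // P y x p} := by
    refine Nat.card_le_card_of_injective (Subtype.impEmbedding _ _ fun p hp ↦ ?_)
      (Subtype.impEmbedding ..).injective
    simpa [P, Sym2.eq_swap, hp] using (p.2.2.1.connected p.1 x).deleteEdges_reachable_or y
  have h₁ : Nat.card {p // P x y p} ≤ _ := card_reachable_le_card_isTree hTU hxy hxyT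
  have h₂ : Nat.card {p // P y x p} ≤ _ :=
    card_reachable_le_card_isTree hTU hxy.symm (hxyT ∘ Adj.symm)
  calc Nat.card V * Nat.card {S : SimpleGraph V // S.IsTree ∧ U ≤ S}
      = Nat.card {p // P x y p} + Nat.card {p // ¬P x y p} := by
        rw [← Nat.card_prod, ← Nat.card_sum, Nat.card_congr (Equiv.sumCompl _)]
    _ ≤ 2 * Nat.card {S : SimpleGraph V // S.IsTree ∧ T ≤ S} := by
        omega

end Counting

end SimpleGraph

open SimpleGraph

theorem tree_count_ratio_general (n : ℕ) (T U : SimpleGraph (Fin n)) (hTU : T ≤ U)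
    (hcard : U.edgeSet.ncard = T.edgeSet.ncard + 1) :
    n * Nat.card {S : SimpleGraph (Fin n) // S.IsTree ∧ U ≤ S}
      ≤ 2 * Nat.card {S : SimpleGraph (Fin n) // S.IsTree ∧ T ≤ S} := by
  obtain ⟨x, y, hxyU, hxyT⟩ : ∃ x y, U.Adj x y ∧ ¬T.Adj x y := by
    by_contra! h
    have hUT : U = T := le_antisymm (fun x y ↦ h x y) hTU
    simp [hUT] at hcard
  simpa using card_mul_card_isTree_le hTU hxyU hxyT

/-- If `T ⊆ U` are forests in `K_n` with `U` having exactly one more edge than `T`, then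
the number of spanning trees containing `T` is at least `n/2` times the number of
spanning trees containing `U`. -/
theorem tree_count_ratio (n : ℕ) (T U : SimpleGraph (Fin n)) (hTU : T ≤ U)
    (hU : U.IsAcyclic) (hcard : U.edgeSet.ncard = T.edgeSet.ncard + 1) :
    n * Nat.card {S : SimpleGraph (Fin n) // S.IsTree ∧ U ≤ S}
      ≤ 2 * Nat.card {S : SimpleGraph (Fin n) // S.IsTree ∧ T ≤ S} :=
  tree_count_ratio_general n T U hTU hcard
end

section
/- For all integers n and t with n ≥ 2t + 110, the inequality (n - t - 12)^(n - t - 14) > n^(n - 2t - 16) holds. -/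
/-!
Write `M = n - t - 12`, so that `n = M + (t + 12)`, and `k = n - 2t - 16 ≤ M`.
Since `1 + x ≤ eˣ`, `n ^ k = M ^ k (1 + (t + 12)/M) ^ k ≤ M ^ k e ^ (t + 12)`,
and `e ^ (t + 12) < 99 ^ (t + 2) ≤ M ^ (t + 2)` once `t ≥ 1` (the case `t = 1` is `e¹³ < 99³`).
Multiplying, `n ^ k < M ^ (k + t + 2) = M ^ (n - t - 14)`.
-/

open Real

theorem add_pow_le_pow_mul_exp {M a : ℝ} {k : ℕ} (hM : 0 < M) (ha : 0 ≤ a) (hk : (k : ℝ) ≤ M) :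
    (M + a) ^ k ≤ M ^ k * exp a := by
  have hbase : M + a ≤ M * exp (a / M) := by
    have := mul_le_mul_of_nonneg_left (add_one_le_exp (a / M)) hM.le
    rwa [mul_add, mul_div_cancel₀ a hM.ne', mul_one, add_comm a] at this
  have hexp : (k : ℝ) * (a / M) ≤ a := by
    rw [mul_div_assoc', div_le_iff₀ hM]
    exact mul_le_mul_of_nonneg_right hk ha |>.trans_eq (mul_comm _ _)
  calc (M + a) ^ k ≤ (M * exp (a / M)) ^ k := pow_le_pow_left₀ (by positivity) hbase k
    _ = M ^ k * exp (k * (a / M)) := by rw [mul_pow, exp_nat_mul]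
    _ ≤ M ^ k * exp a := by gcongr

theorem exp_add_twelve_lt_pow {M : ℝ} {t : ℕ} (ht : 1 ≤ t) (hM : 99 ≤ M) :
    exp (t + 12) < M ^ (t + 2) := by
  obtain ⟨s, rfl⟩ := Nat.exists_eq_add_of_le' ht
  have he : exp 1 ≤ M := by linarith [exp_one_lt_d9]
  have he13 : exp 1 ^ 13 < M ^ 3 :=
    calc exp 1 ^ 13 < 2.7182818286 ^ 13 := by gcongr; exact exp_one_lt_d9
      _ < 99 ^ 3 := by norm_num
      _ ≤ M ^ 3 := by gcongr
  calc exp ((s + 1 : ℕ) + 12) = exp 1 ^ s * exp 1 ^ 13 := by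
        rw [← pow_add, exp_one_pow]; push_cast; ring_nf
    _ < M ^ s * M ^ 3 := mul_lt_mul_of_le_of_lt_of_pos_of_nonneg
        (pow_le_pow_left₀ (exp_pos 1).le he s) he13 (by positivity) (by positivity)
    _ = M ^ (s + 1 + 2) := by ring

/-- For integers `n, t` with `t ≥ 1` and `n ≥ 2t + 110`, we have
`(n - t - 12)^(n - t - 14) > n^(n - 2t - 16)`. -/
theorem pow_inequality (n t : ℕ) (ht : 1 ≤ t) (hn : 2 * t + 110 ≤ n) :
    n ^ (n - 2 * t - 16) < (n - t - 12) ^ (n - t - 14) := by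
  set M := n - t - 12
  set k := n - 2 * t - 16
  have hnM : n = M + (t + 12) := by omega
  have hexp : n - t - 14 = k + (t + 2) := by omega
  have hM : (99 : ℝ) ≤ M := by exact_mod_cast (show 99 ≤ M by omega)
  have hk : (k : ℝ) ≤ M := by exact_mod_cast (show k ≤ M by omega)
  rw [hexp, ← Nat.cast_lt (α := ℝ)]
  calc ((n ^ k : ℕ) : ℝ) = ((M : ℝ) + (t + 12 : ℝ)) ^ k := by rw [hnM]; push_cast; rfl
    _ ≤ (M : ℝ) ^ k * exp (t + 12) := add_pow_le_pow_mul_exp (by linarith) (by positivity) hk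
    _ < (M : ℝ) ^ k * (M : ℝ) ^ (t + 2) := by
        gcongr; exact exp_add_twelve_lt_pow ht hM
    _ = ((M ^ (k + (t + 2)) : ℕ) : ℝ) := by push_cast; ring
end
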